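/- arXiv:1909.10212 — 4 statements merged into one kernel-verified Lean document; each statement's English description precedes it below -/
import Mathlib

section
/- Let θ ∈ (0,2) and R > 1. For r ∈ (0,1) set B(r) := 1 / [ (R^θ − r^θ)² ( 1 + ∫_r^1 ds / ( s (R^θ − s^θ)² ) ) ]. Define α and β by −log α = R^{2θ} − 1 + ∫_0^1 s^{θ−1}(2R^θ − s^θ)/(R^θ − s^θ)² ds and −log β = (R^θ − 1)² − 1. Then for every r ∈ (0,1) one has αr, βr ∈ (0,e) and X(αr) ≤ B(r) ≤ X(βr). -/
open Real MeasureTheory Set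

noncomputable section

/-- The logarithmic weight `X(t) = 1/(1 - log t)`. -/
def Xw (t : ℝ) : ℝ := 1 / (1 - Real.log t)

/-- The function `B(r)` of Lemma 2.2. -/
def Bfun (θ R r : ℝ) : ℝ :=
  1 / ((R ^ θ - r ^ θ) ^ 2 * (1 + ∫ s in r..(1 : ℝ), 1 / (s * (R ^ θ - s ^ θ) ^ 2)))

set_option maxHeartbeats 1000000 in
theorem stmt_1 (θ R : ℝ) (hθ : θ ∈ Set.Ioo (0 : ℝ) 2) (hR : 1 < R)
    (α β : ℝ)
    (hα : α = Real.exp (-(R ^ (2 * θ) - 1 +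
      ∫ s in (0 : ℝ)..1, s ^ (θ - 1) * (2 * R ^ θ - s ^ θ) / (R ^ θ - s ^ θ) ^ 2)))
    (hβ : β = Real.exp (-((R ^ θ - 1) ^ 2 - 1))) :
    ∀ r ∈ Set.Ioo (0 : ℝ) 1,
      α * r ∈ Set.Ioo 0 (Real.exp 1) ∧ β * r ∈ Set.Ioo 0 (Real.exp 1) ∧
      Xw (α * r) ≤ Bfun θ R r ∧ Bfun θ R r ≤ Xw (β * r) := by
  obtain ⟨hθ0, hθ2⟩ := hθ
  intro r hr
  obtain ⟨hr0, hr1⟩ := hr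
  have hR0 : (0 : ℝ) < R := lt_trans one_pos hR
  set a : ℝ := R ^ θ with ha
  have ha1 : 1 < a := (Real.one_lt_rpow_iff_of_pos hR0).mpr (Or.inl ⟨hR, hθ0⟩)
  have ha0 : 0 < a := lt_trans one_pos ha1
  -- continuity of s ↦ s ^ θ
  have hcpow : Continuous fun s : ℝ => s ^ θ :=
    continuous_iff_continuousAt.mpr fun x => Real.continuousAt_rpow_const x θ (Or.inr hθ0.le)
  -- basic bounds on r ^ θ and s ^ θ
  have hrθ0 : 0 < r ^ θ := Real.rpow_pos_of_pos hr0 θ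
  have hrθ1 : r ^ θ < 1 := Real.rpow_lt_one hr0.le hr1 hθ0
  have hsθ : ∀ s ∈ Set.Icc r 1, r ^ θ ≤ s ^ θ ∧ s ^ θ ≤ 1 ∧ 0 < s := by
    intro s hs
    refine ⟨Real.rpow_le_rpow hr0.le hs.1 hθ0.le, Real.rpow_le_one (le_trans hr0.le hs.1) hs.2 hθ0.le,
      lt_of_lt_of_le hr0 hs.1⟩
  set C : ℝ := a - r ^ θ with hC
  have hC0 : 0 < C := by simp only [hC]; linarith
  set f : ℝ → ℝ := fun s => 1 / (s * (a - s ^ θ) ^ 2) with hf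
  set g : ℝ → ℝ := fun s => s ^ (θ - 1) * (2 * a - s ^ θ) / (a - s ^ θ) ^ 2 with hg
  set I : ℝ := ∫ s in r..(1 : ℝ), f s with hI
  set J : ℝ := ∫ s in (0 : ℝ)..1, g s with hJ
  -- continuity of auxiliary functions
  have hfc : ContinuousOn f (Set.uIcc r 1) := by
    rw [Set.uIcc_of_le hr1.le]
    intro s hs
    obtain ⟨h1, h2, h3⟩ := hsθ s hs
    apply ContinuousWithinAt.div continuousWithinAt_const
    · exact ((continuousWithinAt_id.mul ((hcpow.continuousWithinAt.const_sub a).pow 2)))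
    · have : 0 < a - s ^ θ := by linarith
      positivity
  have hfint : IntervalIntegrable f volume r 1 := hfc.intervalIntegrable
  -- integrability of g on subintervals of [0,1]
  have hgint : ∀ u v : ℝ, 0 ≤ u → u ≤ v → v ≤ 1 → IntervalIntegrable g volume u v := by
    intro u v hu huv hv1
    have h1 : IntervalIntegrable (fun s : ℝ => s ^ (θ - 1)) volume u v :=
      intervalIntegral.intervalIntegrable_rpow' (by linarith)
    have h2 : ContinuousOn (fun s : ℝ => (2 * a - s ^ θ) / (a - s ^ θ) ^ 2) (Set.uIcc u v) := by
      intro s hs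
      rw [Set.uIcc_of_le huv] at hs
      have hs1 : s ^ θ ≤ 1 := Real.rpow_le_one (le_trans hu hs.1) (le_trans hs.2 hv1) hθ0.le
      apply ContinuousWithinAt.div
      · exact (hcpow.continuousWithinAt.const_sub (2 * a))
      · exact (hcpow.continuousWithinAt.const_sub a).pow 2
      · have : 0 < a - s ^ θ := by linarith
        positivity
    have := h1.mul_continuousOn h2
    apply this.congr
    intro s _
    simp [hg, mul_div_assoc]
  have hgnn : ∀ s ∈ Set.Icc (0 : ℝ) 1, 0 ≤ g s := by
    intro s hs
    have hs1 : s ^ θ ≤ 1 := Real.rpow_le_one hs.1 hs.2 hθ0.le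
    have h1 : 0 ≤ s ^ (θ - 1) := Real.rpow_nonneg hs.1 _
    have h2 : 0 < a - s ^ θ := by linarith
    have h3 : 0 ≤ 2 * a - s ^ θ := by linarith
    simp only [hg]; positivity
  -- I ≥ 0
  have hInn : 0 ≤ I := by
    apply intervalIntegral.integral_nonneg hr1.le
    intro s hs
    obtain ⟨h1, h2, h3⟩ := hsθ s hs
    have : 0 < a - s ^ θ := by linarith
    simp only [hf]; positivity
  -- J ≥ ∫_r^1 g ≥ 0
  have hJsplit : J = (∫ s in (0:ℝ)..r, g s) + ∫ s in r..(1:ℝ), g s :=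
    (intervalIntegral.integral_add_adjacent_intervals (hgint 0 r le_rfl hr0.le hr1.le)
      (hgint r 1 hr0.le hr1.le le_rfl)).symm
  have hJ0r : 0 ≤ ∫ s in (0:ℝ)..r, g s := by
    apply intervalIntegral.integral_nonneg hr0.le
    intro s hs
    exact hgnn s ⟨hs.1, le_trans hs.2 hr1.le⟩
  have hJr1 : 0 ≤ ∫ s in r..(1:ℝ), g s := by
    apply intervalIntegral.integral_nonneg hr1.le
    intro s hs
    exact hgnn s ⟨le_trans hr0.le hs.1, hs.2⟩
  have hJge : (∫ s in r..(1:ℝ), g s) ≤ J := by rw [hJsplit]; linarith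
  have hJnn : 0 ≤ J := by rw [hJsplit]; linarith
  -- ∫_r^1 1/s = - log r
  have hlogint : (∫ s in r..(1:ℝ), 1 / s) = - Real.log r := by
    rw [integral_one_div]
    · rw [Real.log_div one_ne_zero (ne_of_gt hr0), Real.log_one]; ring
    · rw [Set.uIcc_of_le hr1.le]
      intro h
      exact absurd h.1 (not_le.mpr hr0)
  have hlogr : Real.log r < 0 := Real.log_neg hr0 hr1
  -- D := denominator
  set D : ℝ := C ^ 2 * (1 + I) with hD
  have hD0 : 0 < D := by
    have : 0 < 1 + I := by linarith
    positivity
  -- lower bound : (a-1)^2 - log r ≤ D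
  have hosint : IntervalIntegrable (fun s : ℝ => 1 / s) volume r 1 := by
    apply ContinuousOn.intervalIntegrable
    rw [Set.uIcc_of_le hr1.le]
    intro s hs
    exact continuousWithinAt_const.div continuousWithinAt_id (ne_of_gt (lt_of_lt_of_le hr0 hs.1))
  have hlow : (a - 1) ^ 2 + (- Real.log r) ≤ D := by
    have key : (∫ s in r..(1:ℝ), 1 / s) ≤ ∫ s in r..(1:ℝ), C ^ 2 * f s := by
      apply intervalIntegral.integral_mono_on hr1.le hosint (hfint.const_mul _)
      intro s hs
      obtain ⟨h1, h2, h3⟩ := hsθ s hs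
      have h4 : 0 < a - s ^ θ := by linarith
      have h5 : a - s ^ θ ≤ C := by simp only [hC]; linarith
      simp only [hf]
      rw [mul_one_div, div_le_div_iff₀ h3 (by positivity)]
      calc 1 * (s * (a - s ^ θ) ^ 2) = (a - s ^ θ) ^ 2 * s := by ring
        _ ≤ C ^ 2 * s := by
            apply mul_le_mul_of_nonneg_right _ h3.le
            exact pow_le_pow_left₀ h4.le h5 2
    rw [intervalIntegral.integral_const_mul] at key
    have hC1 : (a - 1) ^ 2 ≤ C ^ 2 := by
      apply pow_le_pow_left₀ (by linarith) (by simp only [hC]; linarith)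
    have : C ^ 2 * (1 + I) = C ^ 2 + C ^ 2 * I := by ring
    rw [hD, this]
    rw [hlogint] at key
    linarith
  -- upper bound : D ≤ a^2 + J - log r
  have hupp : D ≤ a ^ 2 + J + (- Real.log r) := by
    have key : (∫ s in r..(1:ℝ), C ^ 2 * f s) ≤ ∫ s in r..(1:ℝ), (1 / s + g s) := by
      apply intervalIntegral.integral_mono_on hr1.le (hfint.const_mul _)
        (hosint.add (hgint r 1 hr0.le hr1.le le_rfl))
      intro s hs
      obtain ⟨h1, h2, h3⟩ := hsθ s hs
      have h4 : 0 < a - s ^ θ := by linarith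
      have hrθs : 0 < r ^ θ := hrθ0
      -- C^2 ≤ (a - s^θ)^2 + s^θ * (2a - s^θ)
      have hkey : C ^ 2 ≤ (a - s ^ θ) ^ 2 + s ^ θ * (2 * a - s ^ θ) := by
        have expand : C ^ 2 - (a - s ^ θ) ^ 2 = (s ^ θ - r ^ θ) * (2 * a - r ^ θ - s ^ θ) := by
          simp only [hC]; ring
        have b1 : s ^ θ - r ^ θ ≤ s ^ θ := by linarith
        have b2 : 2 * a - r ^ θ - s ^ θ ≤ 2 * a - s ^ θ := by linarith
        have b3 : 0 ≤ s ^ θ - r ^ θ := by linarith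
        have b4 : 0 ≤ 2 * a - r ^ θ - s ^ θ := by linarith
        have b5 : 0 ≤ s ^ θ := by positivity
        nlinarith [mul_le_mul b1 b2 b4 b5]
      have hsθdiv : s ^ θ / s = s ^ (θ - 1) := by
        rw [Real.rpow_sub h3, Real.rpow_one]
      simp only [hf, hg]
      rw [mul_one_div, div_le_iff₀ (by positivity)]
      have : (1 / s + s ^ (θ - 1) * (2 * a - s ^ θ) / (a - s ^ θ) ^ 2) * (s * (a - s ^ θ) ^ 2)
          = (a - s ^ θ) ^ 2 + s ^ θ * (2 * a - s ^ θ) := by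
        rw [← hsθdiv]
        field_simp
      rw [this]
      exact hkey
    rw [intervalIntegral.integral_const_mul] at key
    rw [intervalIntegral.integral_add hosint (hgint r 1 hr0.le hr1.le le_rfl), hlogint] at key
    have hC2 : C ^ 2 ≤ a ^ 2 := by
      apply pow_le_pow_left₀ hC0.le (by simp only [hC]; linarith)
    have : D = C ^ 2 + C ^ 2 * I := by rw [hD]; ring
    rw [this]
    linarith [hJge, key]
  -- now conclude
  have hBfun : Bfun θ R r = 1 / D := rfl
  have hXa : Xw (α * r) = 1 / (a ^ 2 + J + (- Real.log r)) := by
    have h2θ : R ^ (2 * θ) = a ^ 2 := by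
      rw [mul_comm 2 θ, Real.rpow_mul hR0.le]
      rw [show ((2:ℝ) = ((2:ℕ):ℝ)) by norm_num, Real.rpow_natCast]
    have : Real.log (α * r) = -(a ^ 2 - 1 + J) + Real.log r := by
      rw [Real.log_mul (by rw [hα]; exact (Real.exp_pos _).ne') (ne_of_gt hr0), hα,
        Real.log_exp, h2θ]
    dsimp [Xw]
    rw [this]
    ring_nf
  have hXb : Xw (β * r) = 1 / ((a - 1) ^ 2 + (- Real.log r)) := by
    have : Real.log (β * r) = -((a - 1) ^ 2 - 1) + Real.log r := by
      rw [Real.log_mul (by rw [hβ]; exact (Real.exp_pos _).ne') (ne_of_gt hr0), hβ, Real.log_exp]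
    dsimp [Xw]
    rw [this]
    ring_nf
  have hlogrpos : 0 < - Real.log r := by linarith
  have hlowpos : 0 < (a - 1) ^ 2 + (- Real.log r) := by
    have := sq_nonneg (a - 1)
    linarith
  have hα0 : 0 < α := by rw [hα]; exact Real.exp_pos _
  have hβ0 : 0 < β := by rw [hβ]; exact Real.exp_pos _
  have h1e : (1 : ℝ) < Real.exp 1 := by
    have := Real.add_one_le_exp 1
    linarith
  refine ⟨⟨mul_pos hα0 hr0, ?_⟩, ⟨mul_pos hβ0 hr0, ?_⟩, ?_, ?_⟩
  · -- α * r < e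
    have hαlt : α < 1 := by
      have h2θ : R ^ (2 * θ) = a ^ 2 := by
        rw [mul_comm 2 θ, Real.rpow_mul hR0.le]
        rw [show ((2:ℝ) = ((2:ℕ):ℝ)) by norm_num, Real.rpow_natCast]
      have ha2 : 1 < a ^ 2 := one_lt_pow₀ ha1 two_ne_zero
      calc α = Real.exp (-(R ^ (2*θ) - 1 + J)) := hα
        _ < Real.exp 0 := by
            rw [Real.exp_lt_exp, h2θ]
            linarith
        _ = 1 := Real.exp_zero
    calc α * r < 1 * 1 := by
          apply mul_lt_mul' hαlt.le hr1 hr0.le one_pos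
      _ = 1 := by ring
      _ < Real.exp 1 := h1e
  · -- β * r < e
    have hβle : β ≤ Real.exp 1 := by
      rw [hβ, Real.exp_le_exp]
      nlinarith [sq_nonneg (a - 1)]
    calc β * r < β * 1 := mul_lt_mul_of_pos_left hr1 hβ0
      _ = β := mul_one β
      _ ≤ Real.exp 1 := hβle
  · rw [hXa, hBfun]
    exact one_div_le_one_div_of_le hD0 hupp
  · rw [hXb, hBfun]
    exact one_div_le_one_div_of_le hlowpos hlow

end
end

section
/- Let F(z) := Σ_{k=0}^∞ ( (1/2)_k / k! )² z^k for |z| < 1. Then for every ξ ∈ (−1,0) one has (1−ξ) F(ξ)² > 1 and (1−ξ²) F(ξ)² < 1. -/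
/-!
Writing `ξ = -t` with `0 < t < 1`, the series `F(ξ) = ∑ cₖ² (-1)ᵏ tᵏ` with `cₖ = (1/2)ₖ / k!` is
alternating with decreasing terms, since `cₖ₊₁ / cₖ = (k + 1/2) / (k + 1) ≤ 1`. Its first one and
two partial sums therefore bracket it: `1 - t/4 ≤ F(ξ) ≤ 1`. The upper bound gives
`(1 - ξ²) F(ξ)² ≤ 1 - ξ² < 1`, and the lower one gives
`(1 - ξ) F(ξ)² ≥ (1 + t)(1 - t/4)² = 1 + t/2 - 7t²/16 + t³/16 > 1`.
-/

open Real Set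

noncomputable section

/-- The Gauss hypergeometric function `₂F₁(1/2, 1/2; 1; z)` as a power series. -/
def Fhyp (z : ℝ) : ℝ :=
  ∑' k : ℕ, ((ascPochhammer ℝ k).eval (1 / 2) / (Nat.factorial k : ℝ)) ^ 2 * z ^ k

open Finset

theorem Antitone.tsum_alternating_mem_Icc {E : Type*} [Ring E] [PartialOrder E]
    [IsOrderedRing E] [UniformSpace E] [IsUniformAddGroup E] [CompleteSpace E]
    [OrderClosedTopology E] {g : ℕ → E} (hg : Antitone g) (hs : Summable g) :
    ∑' i, (-1) ^ i * g i ∈ Icc (g 0 - g 1) (g 0) := by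
  have h := hs.tendsto_alternating_series_tsum
  constructor
  · simpa [sum_range_succ, sub_eq_add_neg] using hg.alternating_series_le_tendsto h 1
  · simpa using hg.tendsto_le_alternating_series h 0

def halfPochhammerRatio (k : ℕ) : ℝ :=
  (ascPochhammer ℝ k).eval (1 / 2) / (Nat.factorial k : ℝ)

theorem halfPochhammerRatio_zero : halfPochhammerRatio 0 = 1 := by
  simp [halfPochhammerRatio]

theorem halfPochhammerRatio_succ (k : ℕ) :
    halfPochhammerRatio (k + 1) = halfPochhammerRatio k * ((1 / 2 + k) / (k + 1)) := by
  rw [halfPochhammerRatio, halfPochhammerRatio, ascPochhammer_succ_eval, Nat.factorial_succ,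
    Nat.cast_mul, mul_comm ((k + 1 : ℕ) : ℝ), mul_div_mul_comm]
  push_cast
  rfl

theorem halfPochhammerRatio_one : halfPochhammerRatio 1 = 1 / 2 := by
  rw [halfPochhammerRatio_succ, halfPochhammerRatio_zero]
  norm_num

theorem halfPochhammerRatio_pos (k : ℕ) : 0 < halfPochhammerRatio k := by
  induction k with
  | zero => rw [halfPochhammerRatio_zero]; exact one_pos
  | succ k ih => rw [halfPochhammerRatio_succ]; positivity

theorem halfPochhammerRatio_antitone : Antitone halfPochhammerRatio := by
  refine antitone_nat_of_succ_le fun k => ?_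
  rw [halfPochhammerRatio_succ]
  refine mul_le_of_le_one_right (halfPochhammerRatio_pos k).le ?_
  rw [div_le_one (by positivity)]
  linarith

theorem halfPochhammerRatio_le_one (k : ℕ) : halfPochhammerRatio k ≤ 1 :=
  halfPochhammerRatio_zero ▸ halfPochhammerRatio_antitone (Nat.zero_le k)

section

variable {t : ℝ}

theorem antitone_halfPochhammerRatio_sq_mul_pow (ht₀ : 0 ≤ t) (ht₁ : t ≤ 1) :
    Antitone fun k => halfPochhammerRatio k ^ 2 * t ^ k := fun _ _ hmn =>
  mul_le_mul
    (pow_le_pow_left₀ (halfPochhammerRatio_pos _).le (halfPochhammerRatio_antitone hmn) 2)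
    (pow_right_anti₀ ht₀ ht₁ hmn) (by positivity) (by positivity)

theorem summable_halfPochhammerRatio_sq_mul_pow (ht₀ : 0 ≤ t) (ht₁ : t < 1) :
    Summable fun k => halfPochhammerRatio k ^ 2 * t ^ k := by
  refine (summable_geometric_of_lt_one ht₀ ht₁).of_nonneg_of_le (fun k => by positivity)
    fun k => mul_le_of_le_one_left (by positivity) ?_
  exact pow_le_one₀ (halfPochhammerRatio_pos k).le (halfPochhammerRatio_le_one k)

theorem Fhyp_neg (t : ℝ) :
    Fhyp (-t) = ∑' k, (-1) ^ k * (halfPochhammerRatio k ^ 2 * t ^ k) := by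
  refine tsum_congr fun k => ?_
  rw [neg_pow, halfPochhammerRatio]
  ring

theorem Fhyp_neg_mem_Icc (ht₀ : 0 ≤ t) (ht₁ : t < 1) : Fhyp (-t) ∈ Icc (1 - t / 4) 1 := by
  have h := (antitone_halfPochhammerRatio_sq_mul_pow ht₀ ht₁.le).tsum_alternating_mem_Icc
    (summable_halfPochhammerRatio_sq_mul_pow ht₀ ht₁)
  rw [← Fhyp_neg, halfPochhammerRatio_zero, halfPochhammerRatio_one] at h
  rwa [show (1 : ℝ) ^ 2 * t ^ 0 - (1 / 2) ^ 2 * t ^ 1 = 1 - t / 4 by ring,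
    show (1 : ℝ) ^ 2 * t ^ 0 = 1 by ring] at h

end

theorem stmt_7 (ξ : ℝ) (hξ : ξ ∈ Set.Ioo (-1 : ℝ) 0) :
    1 < (1 - ξ) * Fhyp ξ ^ 2 ∧ (1 - ξ ^ 2) * Fhyp ξ ^ 2 < 1 := by
  obtain ⟨hξ₁, hξ₀⟩ := hξ
  obtain ⟨hlower, hupper⟩ := neg_neg ξ ▸ Fhyp_neg_mem_Icc (t := -ξ) (by linarith) (by linarith)
  have hF : 0 < 1 + ξ / 4 := by linarith
  constructor
  · have ht : 0 < -ξ := by linarith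
    calc 1 < (1 - ξ) * (1 + ξ / 4) ^ 2 := by
          -- `(1 - ξ)(1 + ξ/4)² - 1 = -ξ ((1 + ξ)(7 + ξ) + (1 - ξ)) / 16`
          nlinarith [mul_pos ht (mul_pos (by linarith : 0 < 1 + ξ) (by linarith : 0 < 7 + ξ)),
            mul_pos ht (by linarith : 0 < 1 - ξ)]
      _ ≤ (1 - ξ) * Fhyp ξ ^ 2 := by gcongr <;> linarith
  · calc (1 - ξ ^ 2) * Fhyp ξ ^ 2 ≤ (1 - ξ ^ 2) * 1 := by
          gcongr
          · nlinarith
          · exact pow_le_one₀ (by linarith) hupper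
      _ < 1 := by nlinarith
end
end

section
/- Let F(z) := Σ_{k=0}^∞ ( (1/2)_k / k! )² z^k for |z| < 1, and define B := 1 + (1/π) ∫_0^1 (1 − (1+t) F(−t)²) / ( t (1+t) F(−t)² ) dt. Then 1 − 1/π < B < 1. -/
open Real Set MeasureTheory

noncomputable section

/-- The constant `B` appearing in the asymptotics of `g` near zero. -/
def Bconst : ℝ :=
  1 + (1 / π) * ∫ t in (0 : ℝ)..1,
    (1 - (1 + t) * Fhyp (-t) ^ 2) / (t * (1 + t) * Fhyp (-t) ^ 2)

/-!
For `0 ≤ t < 1` the series `F(-t) = ∑ (-1)^k ((1/2)_k / k!)² t^k` is alternating with decreasing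
terms, so its partial sums bracket it: `1 - t/4 ≤ F(-t) ≤ 1 - t/4 + 9t²/64`. These two bounds
squeeze the integrand of `B` into `[-3/4, -1/16]` on `(0, 1)`, whence
`1 - 3/(4π) ≤ B ≤ 1 - 1/(16π)`.
-/

def hypCoeff (k : ℕ) : ℝ := (ascPochhammer ℝ k).eval (1 / 2) / (Nat.factorial k : ℝ)

lemma hypCoeff_succ (k : ℕ) : hypCoeff (k + 1) = hypCoeff k * ((1 / 2 + k) / (k + 1)) := by
  rw [hypCoeff, hypCoeff, ascPochhammer_succ_right, Nat.factorial_succ]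
  simp only [Polynomial.eval_mul, Polynomial.eval_add, Polynomial.eval_X, Polynomial.eval_natCast]
  push_cast
  rw [div_mul_div_comm]
  ring

@[simp]
lemma hypCoeff_zero : hypCoeff 0 = 1 := by simp [hypCoeff]

lemma hypCoeff_one : hypCoeff 1 = 1 / 2 := by
  rw [hypCoeff_succ 0, hypCoeff_zero]; norm_num

lemma hypCoeff_two : hypCoeff 2 = 3 / 8 := by
  rw [hypCoeff_succ 1, hypCoeff_one]; norm_num

lemma hypCoeff_nonneg (k : ℕ) : 0 ≤ hypCoeff k := by
  induction k with
  | zero => simp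
  | succ k ih => rw [hypCoeff_succ]; positivity

lemma hypCoeff_antitone : Antitone hypCoeff := by
  refine antitone_nat_of_succ_le fun k => ?_
  rw [hypCoeff_succ]
  refine mul_le_of_le_one_right (hypCoeff_nonneg k) ?_
  rw [div_le_one (by positivity)]
  linarith

lemma hypCoeff_le_one (k : ℕ) : hypCoeff k ≤ 1 := by
  simpa using hypCoeff_antitone (Nat.zero_le k)

lemma Fhyp_eq_tsum (z : ℝ) : Fhyp z = ∑' k, hypCoeff k ^ 2 * z ^ k := rfl

lemma norm_hypCoeff_sq_mul_pow_le (z : ℝ) (k : ℕ) : ‖hypCoeff k ^ 2 * z ^ k‖ ≤ |z| ^ k := by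
  rw [norm_mul, norm_pow, norm_pow, Real.norm_eq_abs, Real.norm_eq_abs,
    abs_of_nonneg (hypCoeff_nonneg k)]
  exact mul_le_of_le_one_left (by positivity)
    (pow_le_one₀ (hypCoeff_nonneg k) (hypCoeff_le_one k))

lemma continuousOn_Fhyp : ContinuousOn Fhyp (Ioo (-1) 1) := by
  intro x hx
  have hr : |x| < 1 := abs_lt.2 hx
  set r := (|x| + 1) / 2 with hr_def
  have hFr : ContinuousOn Fhyp (Icc (-r) r) := by
    refine continuousOn_tsum (u := fun k => r ^ k) (fun k => by fun_prop)
      (summable_geometric_of_lt_one (by positivity) (by linarith)) fun k z hz => ?_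
    exact (norm_hypCoeff_sq_mul_pow_le z k).trans
      (pow_le_pow_left₀ (abs_nonneg z) (abs_le.2 hz) k)
  have hx' : x ∈ Ioo (-r) r := by
    constructor <;> linarith [abs_lt.1 (show |x| < r by linarith), le_abs_self x]
  exact (hFr.continuousAt (Icc_mem_nhds hx'.1 hx'.2)).continuousWithinAt

lemma Fhyp_neg_eq_alternating (t : ℝ) :
    Fhyp (-t) = ∑' k, (-1) ^ k * (hypCoeff k ^ 2 * t ^ k) := by
  simp_rw [Fhyp_eq_tsum, neg_pow t]
  congr 1 with k
  ring

lemma hypCoeff_sq_mul_pow_antitone {t : ℝ} (ht0 : 0 ≤ t) (ht1 : t ≤ 1) :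
    Antitone fun k => hypCoeff k ^ 2 * t ^ k := fun _ _ hkl =>
  mul_le_mul (pow_le_pow_left₀ (hypCoeff_nonneg _) (hypCoeff_antitone hkl) 2)
    (pow_le_pow_of_le_one ht0 ht1 hkl) (by positivity) (by positivity)

lemma tendsto_partial_sums_Fhyp_neg {t : ℝ} (ht0 : 0 ≤ t) (ht1 : t < 1) :
    Filter.Tendsto (fun n => ∑ k ∈ Finset.range n, (-1) ^ k * (hypCoeff k ^ 2 * t ^ k))
      Filter.atTop (nhds (Fhyp (-t))) := by
  rw [Fhyp_neg_eq_alternating]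
  refine Summable.tendsto_alternating_series_tsum (Summable.of_norm_bounded
    (summable_geometric_of_lt_one (abs_nonneg t) (by rwa [abs_of_nonneg ht0])) ?_)
  exact norm_hypCoeff_sq_mul_pow_le t

lemma one_sub_div_four_le_Fhyp_neg {t : ℝ} (ht0 : 0 ≤ t) (ht1 : t < 1) :
    1 - t / 4 ≤ Fhyp (-t) := by
  have := (hypCoeff_sq_mul_pow_antitone ht0 ht1.le).alternating_series_le_tendsto
    (tendsto_partial_sums_Fhyp_neg ht0 ht1) 1
  norm_num [Finset.sum_range_succ, hypCoeff_zero, hypCoeff_one] at this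
  linarith

lemma Fhyp_neg_le {t : ℝ} (ht0 : 0 ≤ t) (ht1 : t < 1) :
    Fhyp (-t) ≤ 1 - t / 4 + 9 * t ^ 2 / 64 := by
  have := (hypCoeff_sq_mul_pow_antitone ht0 ht1.le).tendsto_le_alternating_series
    (tendsto_partial_sums_Fhyp_neg ht0 ht1) 1
  norm_num [Finset.sum_range_succ, hypCoeff_zero, hypCoeff_one, hypCoeff_two] at this
  linarith


lemma one_sub_mul_sq_div_mem_Icc {t x : ℝ} (ht0 : 0 < t) (ht1 : t ≤ 1)
    (hx : x ∈ Icc (1 - t / 4) (1 - t / 4 + 9 * t ^ 2 / 64)) :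
    (1 - (1 + t) * x ^ 2) / (t * (1 + t) * x ^ 2) ∈ Icc (-(3 / 4)) (-(1 / 16)) := by
  obtain ⟨hlo, hhi⟩ := hx
  have hx0 : 0 < x := by linarith
  have hden : 0 < t * (1 + t) * x ^ 2 := by positivity
  have hsq_lo : (1 - t / 4) ^ 2 ≤ x ^ 2 := pow_le_pow_left₀ (by linarith) hlo 2
  have hsq_hi : x ^ 2 ≤ (1 - t / 4 + 9 * t ^ 2 / 64) ^ 2 := pow_le_pow_left₀ hx0.le hhi 2
  constructor
  · rw [le_div_iff₀ hden]
    have hpoly : (1 + t) * (1 - 3 * t / 4) * (1 - t / 4 + 9 * t ^ 2 / 64) ^ 2 ≤ 1 := by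
      nlinarith [pow_le_pow_of_le_one ht0.le ht1 (show 2 ≤ 3 by norm_num),
        pow_le_pow_of_le_one ht0.le ht1 (show 4 ≤ 5 by norm_num), pow_nonneg ht0.le 6,
        pow_nonneg ht0.le 2]
    nlinarith [mul_le_mul_of_nonneg_left hsq_hi
      (show (0 : ℝ) ≤ (1 + t) * (1 - 3 * t / 4) by nlinarith)]
  · rw [div_le_iff₀ hden]
    nlinarith [mul_le_mul_of_nonneg_left hsq_lo
      (show (0 : ℝ) ≤ (1 + t) * (1 - t / 16) by nlinarith)]

def bIntegrand (t : ℝ) : ℝ :=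
  (1 - (1 + t) * Fhyp (-t) ^ 2) / (t * (1 + t) * Fhyp (-t) ^ 2)

lemma bIntegrand_mem_Icc {t : ℝ} (ht : t ∈ Ioo 0 1) :
    bIntegrand t ∈ Icc (-(3 / 4)) (-(1 / 16)) :=
  one_sub_mul_sq_div_mem_Icc ht.1 ht.2.le
    ⟨one_sub_div_four_le_Fhyp_neg ht.1.le ht.2, Fhyp_neg_le ht.1.le ht.2⟩

lemma continuousOn_bIntegrand : ContinuousOn bIntegrand (Ioo 0 1) := by
  have hF : ContinuousOn (fun t => Fhyp (-t)) (Ioo 0 1) :=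
    continuousOn_Fhyp.comp continuousOn_neg fun t ht => ⟨by linarith [ht.2], by linarith [ht.1]⟩
  refine ContinuousOn.div (by fun_prop) (by fun_prop) fun t ht => ?_
  have : 0 < Fhyp (-t) := by linarith [one_sub_div_four_le_Fhyp_neg ht.1.le ht.2, ht.2]
  have ht0 : 0 < t := ht.1
  positivity

lemma intervalIntegrable_of_continuousOn_Ioo_of_abs_le {f : ℝ → ℝ} {a b C : ℝ} (hab : a ≤ b)
    (hf : ContinuousOn f (Ioo a b)) (hC : ∀ x ∈ Ioo a b, |f x| ≤ C) :
    IntervalIntegrable f volume a b := by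
  rw [intervalIntegrable_iff_integrableOn_Ioo_of_le hab]
  refine (integrableOn_const (C := C) measure_Ioo_lt_top.ne).mono'
    (hf.aestronglyMeasurable measurableSet_Ioo) ?_
  filter_upwards [ae_restrict_mem measurableSet_Ioo] with x hx using hC x hx

theorem stmt_8 : 1 - 1 / π < Bconst ∧ Bconst < 1 := by
  have hint : IntervalIntegrable bIntegrand volume 0 1 :=
    intervalIntegrable_of_continuousOn_Ioo_of_abs_le (C := 1) zero_le_one
      continuousOn_bIntegrand fun t ht => abs_le.2
        ⟨by linarith [(bIntegrand_mem_Icc ht).1], by linarith [(bIntegrand_mem_Icc ht).2]⟩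
  have hlo : -(3 / 4) ≤ ∫ t in (0 : ℝ)..1, bIntegrand t := by
    simpa using intervalIntegral.integral_mono_on_of_le_Ioo zero_le_one
      intervalIntegrable_const hint fun t ht => (bIntegrand_mem_Icc ht).1
  have hhi : ∫ t in (0 : ℝ)..1, bIntegrand t ≤ -(1 / 16) := by
    simpa using intervalIntegral.integral_mono_on_of_le_Ioo zero_le_one
      hint intervalIntegrable_const fun t ht => (bIntegrand_mem_Icc ht).2
  have hπ : 0 < 1 / π := by positivity
  change 1 - 1 / π < 1 + 1 / π * ∫ t in (0 : ℝ)..1, bIntegrand t ∧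
    1 + 1 / π * ∫ t in (0 : ℝ)..1, bIntegrand t < 1
  constructor
  · nlinarith
  · nlinarith
end
end

section
/- Let g : (0,∞) → ℝ be continuous and strictly increasing with 0 < g(s) < 1 for all s > 0, let h : (0,∞) → ℝ be continuous and strictly decreasing with h(r) ≥ 1 for all r > 0, and assume ∫_0^t g(s)^{−2} ds and ∫_0^ρ h(r)^{−2} dr are finite for all t, ρ > 0. If t, ρ > 0 satisfy ∫_0^ρ h(r)^{−2} dr = ∫_0^t g(s)^{−2} ds, then ρ > t and g(t)⁴ sinh²ρ ≥ sinh²t · h(ρ)⁴. -/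
open Real Set MeasureTheory

/-!
Since `g` increases, `1 / g²` decreases, so `∫₀ᵗ g⁻² ≥ t / g(t)²`; since `h` decreases,
`∫₀^ρ h⁻² ≤ ρ / h(ρ)²`. Equality of the integrals gives `t / g(t)² ≤ ρ / h(ρ)²`, and with
`g(t) < 1 ≤ h(ρ)` this forces `t < ρ`. Convexity of `sinh` on `[0, ∞)` with `sinh 0 = 0` makes
`sinh x / x` increasing, so `sinh t / t ≤ sinh ρ / ρ`; multiplying the two ratio inequalities and
squaring gives the claim.
-/

lemma Real.convexOn_sinh_Ici : ConvexOn ℝ (Ici 0) sinh := by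
  refine MonotoneOn.convexOn_of_deriv (convex_Ici 0) continuous_sinh.continuousOn
    differentiable_sinh.differentiableOn ?_
  rw [interior_Ici, deriv_sinh]
  intro x hx y hy hxy
  rw [cosh_le_cosh, abs_of_pos hx, abs_of_pos hy]
  exact hxy

lemma Real.mul_sinh_le_mul_sinh {x y : ℝ} (hx : 0 < x) (hxy : x ≤ y) :
    y * sinh x ≤ x * sinh y := by
  have hy : 0 < y := hx.trans_le hxy
  have hslope := convexOn_sinh_Ici.secant_mono self_mem_Ici hx.le hy.le hx.ne' hy.ne' hxy
  simp only [sinh_zero, sub_zero] at hslope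
  rwa [div_le_div_iff₀ hx hy, mul_comm, mul_comm (sinh y)] at hslope

lemma Real.sinh_mul_le_mul_sinh_of_mul_le {t ρ a b : ℝ} (ht : 0 < t) (htρ : t ≤ ρ) (hb : 0 ≤ b)
    (hab : t * b ≤ ρ * a) : sinh t * b ≤ a * sinh ρ := by
  have hρ : 0 < ρ := ht.trans_le htρ
  have hsinh_ρ : 0 < sinh ρ := sinh_pos_iff.2 hρ
  refine le_of_mul_le_mul_left ?_ hρ
  calc ρ * (sinh t * b) = (ρ * sinh t) * b := by ring
    _ ≤ (t * sinh ρ) * b := mul_le_mul_of_nonneg_right (mul_sinh_le_mul_sinh ht htρ) hb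
    _ = (t * b) * sinh ρ := by ring
    _ ≤ (ρ * a) * sinh ρ := by gcongr
    _ = ρ * (a * sinh ρ) := by ring

section OneDivSq

variable {f : ℝ → ℝ} {s : Set ℝ}

lemma MonotoneOn.one_div_sq (hf : MonotoneOn f s) (hpos : ∀ x ∈ s, 0 < f x) :
    AntitoneOn (fun x => 1 / f x ^ 2) s := fun x hx _ hy hxy =>
  one_div_le_one_div_of_le (pow_pos (hpos x hx) 2)
    (pow_le_pow_left₀ (hpos x hx).le (hf hx hy hxy) 2)

lemma AntitoneOn.one_div_sq (hf : AntitoneOn f s) (hpos : ∀ x ∈ s, 0 < f x) :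
    MonotoneOn (fun x => 1 / f x ^ 2) s := fun _ hx y hy hxy =>
  one_div_le_one_div_of_le (pow_pos (hpos y hy) 2)
    (pow_le_pow_left₀ (hpos y hy).le (hf hx hy hxy) 2)

end OneDivSq

section IntervalIntegral

variable {f : ℝ → ℝ} {a b : ℝ}

lemma mul_le_intervalIntegral_of_antitoneOn (hab : a ≤ b) (hf : AntitoneOn f (Ioc a b))
    (hfi : IntervalIntegrable f volume a b) : (b - a) * f b ≤ ∫ x in a..b, f x := by
  have hconst := intervalIntegral.integral_mono_on_of_le_Ioo hab intervalIntegrable_const hfi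
    fun x hx => hf (Ioo_subset_Ioc_self hx) ⟨hx.1.trans hx.2, le_rfl⟩ hx.2.le
  simpa only [intervalIntegral.integral_const, smul_eq_mul] using hconst

lemma intervalIntegral_le_mul_of_monotoneOn (hab : a ≤ b) (hf : MonotoneOn f (Ioc a b))
    (hfi : IntervalIntegrable f volume a b) : ∫ x in a..b, f x ≤ (b - a) * f b := by
  have hconst := intervalIntegral.integral_mono_on_of_le_Ioo hab hfi intervalIntegrable_const
    fun x hx => hf (Ioo_subset_Ioc_self hx) ⟨hx.1.trans hx.2, le_rfl⟩ hx.2.le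
  simpa only [intervalIntegral.integral_const, smul_eq_mul] using hconst

end IntervalIntegral

theorem stmt_10_general (g h : ℝ → ℝ)
    (hg_mono : StrictMonoOn g (Ioi 0))
    (hg_bnd : ∀ s ∈ Ioi (0 : ℝ), g s ∈ Ioo (0 : ℝ) 1)
    (hh_anti : StrictAntiOn h (Ioi 0))
    (hh_bnd : ∀ r ∈ Ioi (0 : ℝ), 1 ≤ h r)
    (hg_int : ∀ t : ℝ, 0 < t → IntervalIntegrable (fun s => 1 / (g s) ^ 2) volume 0 t)
    (hh_int : ∀ ρ : ℝ, 0 < ρ → IntervalIntegrable (fun r => 1 / (h r) ^ 2) volume 0 ρ)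
    (t ρ : ℝ) (ht : 0 < t) (hρ : 0 < ρ)
    (heq : (∫ r in (0 : ℝ)..ρ, 1 / (h r) ^ 2) = ∫ s in (0 : ℝ)..t, 1 / (g s) ^ 2) :
    t < ρ ∧ Real.sinh t ^ 2 * (h ρ) ^ 4 ≤ (g t) ^ 4 * Real.sinh ρ ^ 2 := by
  obtain ⟨hgt_pos, hgt_lt_one⟩ := hg_bnd t ht
  have hhρ : 1 ≤ h ρ := hh_bnd ρ hρ
  have hg_lower : t * (1 / g t ^ 2) ≤ ∫ s in (0 : ℝ)..t, 1 / g s ^ 2 := by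
    simpa only [sub_zero] using mul_le_intervalIntegral_of_antitoneOn ht.le
      ((hg_mono.monotoneOn.mono Ioc_subset_Ioi_self).one_div_sq fun x hx => (hg_bnd x hx.1).1)
      (hg_int t ht)
  have hh_upper : ∫ r in (0 : ℝ)..ρ, 1 / h r ^ 2 ≤ ρ * (1 / h ρ ^ 2) := by
    simpa only [sub_zero] using intervalIntegral_le_mul_of_monotoneOn hρ.le
      ((hh_anti.antitoneOn.mono Ioc_subset_Ioi_self).one_div_sq
        fun x hx => one_pos.trans_le (hh_bnd x hx.1))
      (hh_int ρ hρ)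
  have hratio : t / g t ^ 2 ≤ ρ / h ρ ^ 2 := by
    simpa only [mul_one_div] using hg_lower.trans (heq.symm.le.trans hh_upper)
  have htρ : t < ρ :=
    calc t < t / g t ^ 2 := (lt_div_iff₀ (by positivity)).2 <|
            mul_lt_of_lt_one_right ht (pow_lt_one₀ hgt_pos.le hgt_lt_one two_ne_zero)
      _ ≤ ρ / h ρ ^ 2 := hratio
      _ ≤ ρ := div_le_self hρ.le (one_le_pow₀ hhρ)
  refine ⟨htρ, ?_⟩
  rw [div_le_div_iff₀ (by positivity) (by positivity)] at hratio
  have hbase : sinh t * h ρ ^ 2 ≤ g t ^ 2 * sinh ρ :=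
    sinh_mul_le_mul_sinh_of_mul_le ht htρ.le (by positivity) hratio
  have hsinh_t_pos : 0 < sinh t := sinh_pos_iff.2 ht
  calc sinh t ^ 2 * h ρ ^ 4 = (sinh t * h ρ ^ 2) ^ 2 := by ring
    _ ≤ (g t ^ 2 * sinh ρ) ^ 2 := pow_le_pow_left₀ (by positivity) hbase 2
    _ = g t ^ 4 * sinh ρ ^ 2 := by ring

theorem stmt_10 (g h : ℝ → ℝ)
    (hg_cont : ContinuousOn g (Ioi 0)) (hg_mono : StrictMonoOn g (Ioi 0))
    (hg_bnd : ∀ s ∈ Ioi (0 : ℝ), g s ∈ Ioo (0 : ℝ) 1)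
    (hh_cont : ContinuousOn h (Ioi 0)) (hh_anti : StrictAntiOn h (Ioi 0))
    (hh_bnd : ∀ r ∈ Ioi (0 : ℝ), 1 ≤ h r)
    (hg_int : ∀ t : ℝ, 0 < t → IntervalIntegrable (fun s => 1 / (g s) ^ 2) volume 0 t)
    (hh_int : ∀ ρ : ℝ, 0 < ρ → IntervalIntegrable (fun r => 1 / (h r) ^ 2) volume 0 ρ)
    (t ρ : ℝ) (ht : 0 < t) (hρ : 0 < ρ)
    (heq : (∫ r in (0 : ℝ)..ρ, 1 / (h r) ^ 2) = ∫ s in (0 : ℝ)..t, 1 / (g s) ^ 2) :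
    t < ρ ∧ Real.sinh t ^ 2 * (h ρ) ^ 4 ≤ (g t) ^ 4 * Real.sinh ρ ^ 2 :=
  stmt_10_general g h hg_mono hg_bnd hh_anti hh_bnd hg_int hh_int t ρ ht hρ heq
end
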